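/- For two nonnegative bounded service rates r₁, r₂ with rⱼ = rⱼ(z) depending on a random state z, and θ₁, θ₂ > 0, the region C_E = {(C₁,C₂) ∈ ℝ≥0² : Cⱼ ≤ −(1/(θⱼTB))log E[e^{−θⱼTB rⱼ(z)}]} obtained as the union over all admissible (measurable, jointly constrained) rate pairs (r₁,r₂) is convex, provided the set of admissible rate pairs is closed under time sharing (i.e., for admissible (r₁,r₂) and (r₁′,r₂′) and λ∈[0,1], the pair (λr₁+(1−λ)r₁′, λr₂+(1−λ)r₂′) is admissible). -/

import Mathlib

/-!
The effective capacity `-(1/c) · log E[e^{-c r}]` is `-(1/c)` times the cumulant generating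
function of `r` at `-c`, and the cumulant generating function is convex in the random variable:
by Hölder's inequality with exponents `1/λ`, `1/(1-λ)`,
`E[e^{t(λX + (1-λ)Y)}] ≤ E[e^{tX}]^λ · E[e^{tY}]^(1-λ)`.
So for `c > 0` each user's effective capacity is concave in its rate, and time sharing between two
admissible rate pairs achieves the corresponding convex combination of capacity pairs.
-/

open MeasureTheory ProbabilityTheory Real

theorem integral_rpow_mul_rpow_le {α : Type*} [MeasurableSpace α] {μ : Measure α}
    {f g : α → ℝ} (hf₀ : 0 ≤ᵐ[μ] f) (hg₀ : 0 ≤ᵐ[μ] g) (hf : Integrable f μ)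
    (hg : Integrable g μ) {p q : ℝ} (hp : 0 ≤ p) (hq : 0 ≤ q) (hpq : p + q = 1) :
    ∫ a, f a ^ p * g a ^ q ∂μ ≤ (∫ a, f a ∂μ) ^ p * (∫ a, g a ∂μ) ^ q := by
  have hfg₀ : 0 ≤ᵐ[μ] fun a => f a ^ p * g a ^ q := by
    filter_upwards [hf₀, hg₀] with a hfa hga
    exact mul_nonneg (rpow_nonneg hfa p) (rpow_nonneg hga q)
  have hfg : AEStronglyMeasurable (fun a => f a ^ p * g a ^ q) μ :=
    (hf.1.aemeasurable.pow_const p).mul (hg.1.aemeasurable.pow_const q) |>.aestronglyMeasurable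
  rw [integral_eq_lintegral_of_nonneg_ae hf₀ hf.1, integral_eq_lintegral_of_nonneg_ae hg₀ hg.1,
    integral_eq_lintegral_of_nonneg_ae hfg₀ hfg, ENNReal.toReal_rpow, ENNReal.toReal_rpow,
    ← ENNReal.toReal_mul]
  refine ENNReal.toReal_mono (ENNReal.mul_ne_top
    (ENNReal.rpow_ne_top_of_nonneg hp hf.lintegral_lt_top.ne)
    (ENNReal.rpow_ne_top_of_nonneg hq hg.lintegral_lt_top.ne)) ?_
  calc ∫⁻ a, ENNReal.ofReal (f a ^ p * g a ^ q) ∂μ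
      = ∫⁻ a, ENNReal.ofReal (f a) ^ p * ENNReal.ofReal (g a) ^ q ∂μ := by
        refine lintegral_congr_ae ?_
        filter_upwards [hf₀, hg₀] with a hfa hga
        rw [ENNReal.ofReal_rpow_of_nonneg hfa hp, ENNReal.ofReal_rpow_of_nonneg hga hq,
          ENNReal.ofReal_mul (rpow_nonneg hfa p)]
    _ ≤ _ := ENNReal.lintegral_mul_norm_pow_le hf.1.aemeasurable.ennreal_ofReal
        hg.1.aemeasurable.ennreal_ofReal hp hq hpq

namespace ProbabilityTheory

variable {Ω : Type*} [MeasurableSpace Ω] {μ : Measure Ω}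

theorem cgf_smul_add_smul_le [NeZero μ] {X Y : Ω → ℝ} {t a b : ℝ}
    (hX : Integrable (fun ω => exp (t * X ω)) μ) (hY : Integrable (fun ω => exp (t * Y ω)) μ)
    (ha : 0 ≤ a) (hb : 0 ≤ b) (hab : a + b = 1) :
    cgf (a • X + b • Y) μ t ≤ a * cgf X μ t + b * cgf Y μ t := by
  have hsplit : (fun ω => exp (t * (a • X + b • Y) ω))
      = fun ω => exp (t * X ω) ^ a * exp (t * Y ω) ^ b := by
    ext ω
    rw [← exp_mul, ← exp_mul, ← exp_add, Pi.add_apply, Pi.smul_apply, Pi.smul_apply,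
      smul_eq_mul, smul_eq_mul]
    ring_nf
  have hint : Integrable (fun ω => exp (t * (a • X + b • Y) ω)) μ := by
    rw [hsplit]
    refine ((hX.const_mul a).add (hY.const_mul b)).mono' ((hX.1.aemeasurable.pow_const a).mul
      (hY.1.aemeasurable.pow_const b)).aestronglyMeasurable (ae_of_all _ fun ω => ?_)
    rw [norm_of_nonneg (by positivity)]
    exact geom_mean_le_arith_mean2_weighted ha hb (exp_pos _).le (exp_pos _).le hab
  have hmgf : mgf (a • X + b • Y) μ t ≤ mgf X μ t ^ a * mgf Y μ t ^ b := by
    rw [mgf, hsplit]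
    exact integral_rpow_mul_rpow_le (ae_of_all _ fun ω => (exp_pos _).le)
      (ae_of_all _ fun ω => (exp_pos _).le) hX hY ha hb hab
  have hXpos := mgf_pos' (NeZero.ne μ) hX
  have hYpos := mgf_pos' (NeZero.ne μ) hY
  calc cgf (a • X + b • Y) μ t ≤ log (mgf X μ t ^ a * mgf Y μ t ^ b) :=
        log_le_log (mgf_pos' (NeZero.ne μ) hint) hmgf
    _ = a * cgf X μ t + b * cgf Y μ t := by
        rw [log_mul (by positivity) (by positivity), log_rpow hXpos, log_rpow hYpos, cgf, cgf]

/-- The paper's `Cⱼ(θⱼ)` is `effectiveCapacity volume (θⱼ * T * B) rⱼ`. -/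
noncomputable def effectiveCapacity (μ : Measure Ω) (c : ℝ) (r : Ω → ℝ) : ℝ :=
  -(1 / c) * cgf r μ (-c)

theorem le_effectiveCapacity_smul_add_smul [NeZero μ] {c a b : ℝ} {X Y : Ω → ℝ} (hc : 0 ≤ c)
    (hX : Integrable (fun ω => exp (-c * X ω)) μ) (hY : Integrable (fun ω => exp (-c * Y ω)) μ)
    (ha : 0 ≤ a) (hb : 0 ≤ b) (hab : a + b = 1) :
    a * effectiveCapacity μ c X + b * effectiveCapacity μ c Y
      ≤ effectiveCapacity μ c (a • X + b • Y) := by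
  calc a * effectiveCapacity μ c X + b * effectiveCapacity μ c Y
      = -(1 / c) * (a * cgf X μ (-c) + b * cgf Y μ (-c)) := by
        simp only [effectiveCapacity]
        ring
    _ ≤ effectiveCapacity μ c (a • X + b • Y) :=
        mul_le_mul_of_nonpos_left (cgf_smul_add_smul_le hX hY ha hb hab)
          (neg_nonpos.2 (by positivity))

theorem integrable_exp_neg_mul_of_nonneg [IsFiniteMeasure μ] {c : ℝ} {r : Ω → ℝ} (hc : 0 ≤ c)
    (hr : AEMeasurable r μ) (hr₀ : ∀ᵐ ω ∂μ, 0 ≤ r ω) :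
    Integrable (fun ω => exp (-c * r ω)) μ := by
  refine .of_mem_Icc 0 1 (measurable_exp.comp_aemeasurable (hr.const_mul (-c))) ?_
  filter_upwards [hr₀] with ω hω
  exact ⟨(exp_pos _).le, exp_le_one_iff.2 (by nlinarith)⟩

end ProbabilityTheory

theorem convex_region_of_timeSharing {ι : Type*} (A : Set ι) (mix : ℝ → ι → ι → ι)
    (hmix : ∀ p ∈ A, ∀ q ∈ A, ∀ lam ∈ Set.Icc (0 : ℝ) 1, mix lam p q ∈ A) (f g : ι → ℝ)
    (hf : ∀ p ∈ A, ∀ q ∈ A, ∀ lam ∈ Set.Icc (0 : ℝ) 1,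
      lam * f p + (1 - lam) * f q ≤ f (mix lam p q))
    (hg : ∀ p ∈ A, ∀ q ∈ A, ∀ lam ∈ Set.Icc (0 : ℝ) 1,
      lam * g p + (1 - lam) * g q ≤ g (mix lam p q)) :
    Convex ℝ {C : ℝ × ℝ | 0 ≤ C.1 ∧ 0 ≤ C.2 ∧ ∃ p ∈ A, C.1 ≤ f p ∧ C.2 ≤ g p} := by
  rintro x ⟨hx₁, hx₂, p, hp, hxp₁, hxp₂⟩ y ⟨hy₁, hy₂, q, hq, hyq₁, hyq₂⟩ a b ha hb hab
  obtain rfl : b = 1 - a := by linarith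
  have hlam : a ∈ Set.Icc (0 : ℝ) 1 := ⟨ha, by linarith⟩
  simp only [Set.mem_ofPred_eq, Prod.fst_add, Prod.snd_add, Prod.smul_fst, Prod.smul_snd,
    smul_eq_mul]
  refine ⟨by positivity, by positivity, mix a p q, hmix p hp q hq a hlam, ?_, ?_⟩
  · exact le_trans (by gcongr) (hf p hp q hq a hlam)
  · exact le_trans (by gcongr) (hg p hp q hq a hlam)

/-- The effective capacity region of a two-user system,
`C_E = ⋃_{(r₁,r₂) admissible} {(C₁,C₂) ≥ 0 : Cⱼ ≤ −(1/(θⱼTB))·log E[e^{−θⱼTB rⱼ}]}`,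
is convex provided the set of admissible rate pairs is closed under time
sharing. -/
theorem effective_capacity_region_convex
    {Ω : Type*} [MeasureSpace Ω] [IsProbabilityMeasure (volume : Measure Ω)]
    (A : Set ((Ω → ℝ) × (Ω → ℝ)))
    (hA : ∀ rp ∈ A, Measurable rp.1 ∧ Measurable rp.2
      ∧ (∀ ω, 0 ≤ rp.1 ω) ∧ (∀ ω, 0 ≤ rp.2 ω)
      ∧ ∃ M : ℝ, ∀ ω, rp.1 ω ≤ M ∧ rp.2 ω ≤ M)
    (htimeshare : ∀ rp ∈ A, ∀ rq ∈ A, ∀ lam ∈ Set.Icc (0 : ℝ) 1,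
      ((fun ω => lam * rp.1 ω + (1 - lam) * rq.1 ω),
       (fun ω => lam * rp.2 ω + (1 - lam) * rq.2 ω)) ∈ A)
    (θ₁ θ₂ T B : ℝ) (hθ₁ : 0 < θ₁) (hθ₂ : 0 < θ₂) (hT : 0 < T) (hB : 0 < B)
    (EC : ℝ → (Ω → ℝ) → ℝ)
    (hEC : EC = fun c r => -(1 / c) * Real.log (∫ ω, Real.exp (-c * r ω)))
    (Region : Set (ℝ × ℝ))
    (hRegion : Region = {C : ℝ × ℝ | 0 ≤ C.1 ∧ 0 ≤ C.2 ∧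
      ∃ rp ∈ A, C.1 ≤ EC (θ₁ * T * B) rp.1 ∧ C.2 ≤ EC (θ₂ * T * B) rp.2}) :
    Convex ℝ Region := by
  subst hEC hRegion
  have hint : ∀ rp ∈ A, ∀ c : ℝ, 0 ≤ c → Integrable (fun ω => exp (-c * rp.1 ω))
      ∧ Integrable (fun ω => exp (-c * rp.2 ω)) := by
    intro rp hrp c hc
    obtain ⟨hm₁, hm₂, h₁, h₂, -⟩ := hA rp hrp
    exact ⟨integrable_exp_neg_mul_of_nonneg hc hm₁.aemeasurable (ae_of_all _ h₁),
      integrable_exp_neg_mul_of_nonneg hc hm₂.aemeasurable (ae_of_all _ h₂)⟩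
  have hc₁ : 0 ≤ θ₁ * T * B := by positivity
  have hc₂ : 0 ≤ θ₂ * T * B := by positivity
  refine convex_region_of_timeSharing A _ htimeshare
    (fun rp => effectiveCapacity volume (θ₁ * T * B) rp.1)
    (fun rp => effectiveCapacity volume (θ₂ * T * B) rp.2) ?_ ?_
  · intro rp hrp rq hrq lam hlam
    exact le_effectiveCapacity_smul_add_smul hc₁ (hint rp hrp _ hc₁).1 (hint rq hrq _ hc₁).1
      hlam.1 (sub_nonneg.2 hlam.2) (add_sub_cancel _ _)
  · intro rp hrp rq hrq lam hlam
    exact le_effectiveCapacity_smul_add_smul hc₂ (hint rp hrp _ hc₂).2 (hint rq hrq _ hc₂).2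
      hlam.1 (sub_nonneg.2 hlam.2) (add_sub_cancel _ _)
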